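/- For any w ∈ ℝ, y < L*, and 0 ≤ s < t(y), setting t = t(y) − s and x = L* − w, the density satisfies the exact identity p_t(x, y) = (1/√(2πt)) exp( g(y) − ρw + βws − (β²/6)s³ − (βs² − 2w)²/(8t) ). In particular p_t(x,y) ≤ (1/√(2πt)) exp(g(y) − ρw + βws − (β²/6)s³). -/
import Mathlib


open Real

theorem density_exact_formula (ρ β : ℝ) (hρ : 0 < ρ) (hβ : 0 < β)
    (Lstar : ℝ) (hL : Lstar = ρ^2 / (2*β))
    (p : ℝ → ℝ → ℝ → ℝ)
    (hp : ∀ t x y, p t x y = (1 / Real.sqrt (2*π*t)) *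
      Real.exp (ρ*x - ρ*y - (x-y)^2/(2*t) - ρ^2*t/2 + β*(x+y)*t/2 + β^2*t^3/24))
    (tfun g : ℝ → ℝ)
    (htfun : ∀ y, tfun y = Real.sqrt (2*(Lstar - y)/β))
    (hg : ∀ y, g y = ρ*(Lstar - y) - (2 * Real.sqrt (2*β) / 3) * (Lstar - y) ^ ((3:ℝ)/2))
    (w y s : ℝ) (hy : y < Lstar) (hs0 : 0 ≤ s) (hs : s < tfun y)
    (t x : ℝ) (ht : t = tfun y - s) (hx : x = Lstar - w) :
    p t x y = (1 / Real.sqrt (2*π*t)) *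
      Real.exp (g y - ρ*w + β*w*s - (β^2/6)*s^3 - (β*s^2 - 2*w)^2/(8*t)) ∧
    p t x y ≤ (1 / Real.sqrt (2*π*t)) *
      Real.exp (g y - ρ*w + β*w*s - (β^2/6)*s^3) := by
  set T := tfun y with hTdef
  have ha : (0:ℝ) < Lstar - y := by linarith
  have hT0 : 0 ≤ T := by rw [hTdef, htfun]; exact Real.sqrt_nonneg _
  have hT2 : T ^ 2 = 2 * (Lstar - y) / β := by
    rw [hTdef, htfun, sq, Real.mul_self_sqrt]
    positivity
  have hyT : Lstar - y = β * T ^ 2 / 2 := by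
    field_simp at hT2 ⊢; linarith
  have ht0 : 0 < t := by rw [ht]; linarith
  -- sqrt(2β) * sqrt(Lstar - y) = β * T
  have h1 : Real.sqrt (2*β) * Real.sqrt (Lstar - y) = β * T := by
    rw [← Real.sqrt_mul (by positivity)]
    have : 2 * β * (Lstar - y) = (β * T) ^ 2 := by rw [hyT]; ring
    rw [this, Real.sqrt_sq (by positivity)]
  have h32 : (Lstar - y) ^ ((3:ℝ)/2) = (Lstar - y) * Real.sqrt (Lstar - y) := by
    rw [show ((3:ℝ)/2) = 1 + 1/2 by norm_num, Real.rpow_add ha, Real.rpow_one,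
      ← Real.sqrt_eq_rpow]
  have hgval : g y = ρ * β * T^2 / 2 - β^2 * T^3 / 3 := by
    rw [hg, h32]
    have : 2 * Real.sqrt (2*β) / 3 * ((Lstar - y) * Real.sqrt (Lstar - y))
        = 2/3 * (Lstar - y) * (Real.sqrt (2*β) * Real.sqrt (Lstar - y)) := by ring
    rw [this, h1, hyT]
    ring
  have hρ2 : ρ ^ 2 = 2 * β * Lstar := by
    rw [hL]; field_simp
  have hyv : y = Lstar - β * T ^ 2 / 2 := by linarith
  have hexp : ρ*x - ρ*y - (x-y)^2/(2*t) - ρ^2*t/2 + β*(x+y)*t/2 + β^2*t^3/24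
      = g y - ρ*w + β*w*s - (β^2/6)*s^3 - (β*s^2 - 2*w)^2/(8*t) := by
    rw [hgval, hx, hyv, hρ2, ht]
    have hts : T - s ≠ 0 := by
      have : 0 < T - s := by rw [hTdef] at ht ⊢; linarith
      linarith
    field_simp
    ring
  constructor
  · rw [hp, hexp]
  · rw [hp, hexp]
    apply mul_le_mul_of_nonneg_left _ (by positivity)
    apply Real.exp_le_exp.2
    have : 0 ≤ (β*s^2 - 2*w)^2/(8*t) := by positivity
    linarith
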